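/- arXiv:0906.5177 — 3 statements merged into one kernel-verified Lean document; each statement's English description precedes it below -/
import Mathlib

section
/- If a Laurent polynomial z(q,t) ∈ ℕ[q^{±1}, t^{±1}] admits a decomposition z = q^s(q+q^{-1}) + f_2(q,t)(1+q^4 t) with f_2 ∈ ℕ[q^{±1}, t^{±1}] (i.e., only the k=2 term nonzero), then this decomposition is unique: both s and f_2 are determined by z. -/
/-!
Specialising `q = 2`, `t = -2^{-j}` kills `1 + q^j t` and sends `q^s (q + q^{-1})` to
`2^s · 5/2`, which determines `s`. Once `s` is known, `f` is determined because
`ℤ[q^{±1}, t^{±1}]` is an integral domain.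
-/

open scoped BigOperators

noncomputable section

/-- Laurent polynomials `ℤ[q^{±1}, t^{±1}]` in two variables `q`, `t`,
modelled as the group algebra of `ℤ × ℤ` over `ℤ`. -/
abbrev L2 : Type := AddMonoidAlgebra ℤ (ℤ × ℤ)

/-- The monomial `c · q^j · t^r`. -/
noncomputable def mono (j r c : ℤ) : L2 := AddMonoidAlgebra.single (j, r) c

/-- The monomial `q^j t^r`. -/
noncomputable def Q (j r : ℤ) : L2 := AddMonoidAlgebra.single (j, r) 1

/-- A Laurent polynomial lies in `ℕ[q^{±1}, t^{±1}]`: all coefficients are non-negative. -/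
def IsNonneg (f : L2) : Prop := ∀ m : ℤ × ℤ, 0 ≤ f.coeff m

/-- A `1`-decomposition of `z`:
`z = q^s (q + q^{-1}) + Σ_{k ≥ 2} f_k (1 + q^{2k} t)` with each `f_k ∈ ℕ[q^{±1}, t^{±1}]`
and only finitely many `f_k` nonzero. -/
def OneDecomp (z : L2) (s : ℤ) (f : ℕ → L2) : Prop :=
  (Function.support f).Finite ∧ (∀ k, IsNonneg (f k)) ∧ (∀ k, k < 2 → f k = 0) ∧
    z = Q s 0 * (Q 1 0 + Q (-1) 0) + ∑ᶠ k : ℕ, f k * (1 + Q (2 * (k : ℤ)) 1)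

/-- A `0`-decomposition of `z`: as a `1`-decomposition but without the `q^s(q+q^{-1})` term. -/
def ZeroDecomp (z : L2) (f : ℕ → L2) : Prop :=
  (Function.support f).Finite ∧ (∀ k, IsNonneg (f k)) ∧ (∀ k, k < 2 → f k = 0) ∧
    z = ∑ᶠ k : ℕ, f k * (1 + Q (2 * (k : ℤ)) 1)

namespace L2

def evalMonoidHom (x y : ℚˣ) : Multiplicative (ℤ × ℤ) →* ℚ where
  toFun m := ((x ^ m.toAdd.1 * y ^ m.toAdd.2 : ℚˣ) : ℚ)
  map_one' := by simp
  map_mul' a b := by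
    simp only [toAdd_mul, Prod.fst_add, Prod.snd_add, zpow_add, Units.val_mul]
    ring

def eval (x y : ℚˣ) : L2 →+* ℚ :=
  (AddMonoidAlgebra.lift ℤ ℚ (ℤ × ℤ) (evalMonoidHom x y)).toRingHom

@[simp]
lemma eval_Q (x y : ℚˣ) (j r : ℤ) : eval x y (Q j r) = ((x ^ j * y ^ r : ℚˣ) : ℚ) := by
  simp [eval, Q, evalMonoidHom]

lemma one_add_Q_ne_zero (j r : ℤ) : (1 + Q j r : L2) ≠ 0 := by
  intro h
  simpa using congrArg (eval 1 1) h

lemma eval_one_add_Q_eq_zero (x : ℚˣ) (j : ℤ) : eval x (-(x ^ j)⁻¹) (1 + Q j 1) = 0 := by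
  simp

lemma eval_add_mul_one_add_Q (x : ℚˣ) (j n : ℤ) (g : L2) :
    eval x (-(x ^ j)⁻¹) (Q n 0 * (Q 1 0 + Q (-1) 0) + g * (1 + Q j 1)) =
      (x : ℚ) ^ n * (x + (x : ℚ)⁻¹) := by
  rw [map_add, map_mul _ g, eval_one_add_Q_eq_zero, mul_zero, add_zero]
  simp

lemma exponent_eq_of_add_mul_one_add_Q_eq {j s s' : ℤ} {f f' : L2}
    (h : Q s 0 * (Q 1 0 + Q (-1) 0) + f * (1 + Q j 1) =
      Q s' 0 * (Q 1 0 + Q (-1) 0) + f' * (1 + Q j 1)) :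
    s = s' := by
  have h2 := congrArg (eval (Units.mk0 2 two_ne_zero) (-(Units.mk0 2 two_ne_zero ^ j)⁻¹)) h
  rw [eval_add_mul_one_add_Q, eval_add_mul_one_add_Q, mul_left_inj' (by norm_num)] at h2
  exact zpow_right_injective₀ two_pos (by norm_num) h2

theorem add_mul_one_add_Q_inj {j s s' : ℤ} {f f' : L2}
    (h : Q s 0 * (Q 1 0 + Q (-1) 0) + f * (1 + Q j 1) =
      Q s' 0 * (Q 1 0 + Q (-1) 0) + f' * (1 + Q j 1)) :
    s = s' ∧ f = f' := by
  obtain rfl := exponent_eq_of_add_mul_one_add_Q_eq h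
  exact ⟨rfl, mul_right_cancel₀ (one_add_Q_ne_zero j 1) (add_left_cancel h)⟩

end L2

theorem onlyF2_decomposition_unique_general (z : L2)
    (s s' : ℤ) (f₂ f₂' : L2)
    (h : z = Q s 0 * (Q 1 0 + Q (-1) 0) + f₂ * (1 + Q 4 1))
    (h' : z = Q s' 0 * (Q 1 0 + Q (-1) 0) + f₂' * (1 + Q 4 1)) :
    s = s' ∧ f₂ = f₂' :=
  L2.add_mul_one_add_Q_inj (h.symm.trans h')

/-- If `z ∈ ℕ[q^{±1}, t^{±1}]` admits a decomposition `z = q^s(q+q^{-1}) + f₂ (1 + q^4 t)`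
with `f₂ ∈ ℕ[q^{±1}, t^{±1}]` (only the `k = 2` term nonzero), then `s` and `f₂`
are uniquely determined by `z`. -/
theorem onlyF2_decomposition_unique (z : L2) (hz : IsNonneg z)
    (s s' : ℤ) (f₂ f₂' : L2) (hf : IsNonneg f₂) (hf' : IsNonneg f₂')
    (h : z = Q s 0 * (Q 1 0 + Q (-1) 0) + f₂ * (1 + Q 4 1))
    (h' : z = Q s' 0 * (Q 1 0 + Q (-1) 0) + f₂' * (1 + Q 4 1)) :
    s = s' ∧ f₂ = f₂' :=
  onlyF2_decomposition_unique_general z s s' f₂ f₂' h h'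
end
end

section
/- Let z(q,t) ∈ ℕ[q^{±1}, t^{±1}] and write z = Σ_{j,r} a_{j,r} q^j t^r. Every 1-decomposition of z arises as the sum of a 1-decomposition of u(q,t) = Σ_{j, r≥0} a_{j,r} q^j t^r + t^{-1} w(q) and a 0-decomposition of v(q,t) = Σ_{j, r<0} a_{j,r} q^j t^r - t^{-1} w(q), for some Laurent polynomial w ∈ ℕ[q^{±1}] such that v has non-negative coefficients (so v ∈ t^{-1} ℕ[q^{±1}, t^{-1}]). -/
/-! Split every `f_k` as `g_k + h_k`, with `g_k` the monomials of `t`-degree `≥ -1` and `h_k` those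
of `t`-degree `≤ -2`. Multiplication by `1 + q^{2k} t` only adds `0` or `1` to `t`-degrees, so
`q^s (q + q^{-1}) + Σ g_k (1 + q^{2k} t)` has `t`-degrees `≥ -1` and `Σ h_k (1 + q^{2k} t)` has
`t`-degrees `< 0`. The two parts of `z` therefore overlap only in `t`-degree `-1`, and `w` is the
coefficient of `t^{-1}` in the first one. -/

open scoped BigOperators

noncomputable section

/-- The part of `z` with non-negative `t`-degree. -/
noncomputable def tPos (z : L2) : L2 := AddMonoidAlgebra.ofCoeff (z.coeff.filter (fun m : ℤ × ℤ => 0 ≤ m.2))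

/-- The part of `z` with negative `t`-degree. -/
noncomputable def tNeg (z : L2) : L2 := AddMonoidAlgebra.ofCoeff (z.coeff.filter (fun m : ℤ × ℤ => m.2 < 0))

/-- `t^{-1} w(q)` for a one-variable Laurent polynomial `w`. -/
noncomputable def tInvMul (w : AddMonoidAlgebra ℤ ℤ) : L2 :=
  Finsupp.sum w.coeff fun j c => AddMonoidAlgebra.single ((j, -1) : ℤ × ℤ) c

/-- `w ∈ ℕ[q^{±1}]`. -/
def IsNonneg₁ (w : AddMonoidAlgebra ℤ ℤ) : Prop := ∀ j : ℤ, 0 ≤ w.coeff j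

open AddMonoidAlgebra

lemma isNonneg_zero : IsNonneg 0 := fun _ => le_rfl

lemma IsNonneg.add {F G : L2} (hF : IsNonneg F) (hG : IsNonneg G) : IsNonneg (F + G) :=
  fun m => add_nonneg (hF m) (hG m)

lemma IsNonneg.mul {F G : L2} (hF : IsNonneg F) (hG : IsNonneg G) : IsNonneg (F * G) := by
  classical
  intro m
  rw [coeff_mul]
  exact Finset.sum_nonneg fun x _ => Finset.sum_nonneg fun y _ => by
    dsimp only
    split_ifs
    exacts [mul_nonneg (hF x) (hG y), le_rfl]

lemma IsNonneg.finsum {ι : Type*} {F : ι → L2} (h : ∀ i, IsNonneg (F i)) :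
    IsNonneg (∑ᶠ i, F i) :=
  finsum_induction IsNonneg isNonneg_zero (fun _ _ => IsNonneg.add) h

lemma isNonneg_Q (j r : ℤ) : IsNonneg (Q j r) := by
  intro m
  rw [Q, coeff_single, Finsupp.single_apply]
  split_ifs <;> norm_num

def tSupported (p : ℤ → Prop) : Submodule ℤ L2 := supported ℤ ℤ {m | p m.2}

section tSupported

variable {p p' p'' : ℤ → Prop}

lemma mem_tSupported {F : L2} : F ∈ tSupported p ↔ ∀ m, F.coeff m ≠ 0 → p m.2 :=
  ⟨fun h _ hm => h (Finsupp.mem_support_iff.2 hm), fun h _ hm => h _ (Finsupp.mem_support_iff.1 hm)⟩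

lemma Q_mem_tSupported {j r : ℤ} (hr : p r) : Q j r ∈ tSupported p := by
  rw [mem_tSupported]
  intro m hm
  rw [Q, coeff_single, Finsupp.single_apply] at hm
  split_ifs at hm with hjm
  · exact hjm ▸ hr
  · exact absurd rfl hm

lemma mul_mem_tSupported {F G : L2} (hF : F ∈ tSupported p) (hG : G ∈ tSupported p')
    (h : ∀ a b, p a → p' b → p'' (a + b)) : F * G ∈ tSupported p'' := by
  classical
  intro m hm
  obtain ⟨x, hx, y, hy, rfl⟩ := Finset.mem_add.1 (support_coeff_mul_subset F G hm)
  exact h _ _ (hF hx) (hG hy)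

lemma finsum_mem_tSupported {ι : Type*} {F : ι → L2} (h : ∀ i, F i ∈ tSupported p) :
    ∑ᶠ i, F i ∈ tSupported p :=
  finsum_induction (· ∈ tSupported p) (zero_mem _) (fun _ _ => add_mem) h

lemma Q_mul_Q_add_Q_mem_tSupported (h0 : p 0) (s j j' : ℤ) :
    Q s 0 * (Q j 0 + Q j' 0) ∈ tSupported p :=
  mul_mem_tSupported (p := (· = 0)) (Q_mem_tSupported rfl)
    (add_mem (Q_mem_tSupported h0) (Q_mem_tSupported h0)) fun a b ha hb => by rwa [ha, zero_add]

end tSupported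

def tTrunc (p : ℤ → Prop) [DecidablePred p] : L2 →+ L2 :=
  coeffAddEquiv.symm.toAddMonoidHom.comp
    ((Finsupp.filterAddHom fun m : ℤ × ℤ => p m.2).comp coeffAddEquiv.toAddMonoidHom)

section tTrunc

variable {p q : ℤ → Prop} [DecidablePred p]

lemma tPos_eq_tTrunc (F : L2) : tPos F = tTrunc (0 ≤ ·) F := rfl

lemma tNeg_eq_tTrunc (F : L2) : tNeg F = tTrunc (· < 0) F := rfl

lemma coeff_tTrunc (F : L2) (m : ℤ × ℤ) :
    (tTrunc p F).coeff m = if p m.2 then F.coeff m else 0 :=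
  Finsupp.filter_apply _ _ _

lemma tTrunc_mem_tSupported (F : L2) : tTrunc p F ∈ tSupported p := by
  rw [mem_tSupported]
  intro m hm
  rw [coeff_tTrunc] at hm
  by_contra hp
  exact hm (if_neg hp)

lemma tTrunc_eq_self {F : L2} (hF : F ∈ tSupported p) : tTrunc p F = F := by
  ext m
  rw [coeff_tTrunc]
  split_ifs with hp
  · rfl
  · by_contra hm
    exact hp (mem_tSupported.1 hF m (Ne.symm hm))

lemma tTrunc_eq_zero {F : L2} (hF : F ∈ tSupported q) (hqp : ∀ r, q r → ¬ p r) :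
    tTrunc p F = 0 := by
  ext m
  rw [coeff_tTrunc]
  split_ifs with hp
  · by_contra hm
    exact hqp _ (mem_tSupported.1 hF m hm) hp
  · rfl

lemma tTrunc_add_tTrunc [DecidablePred q] (hpq : ∀ r, q r ↔ ¬ p r) (F : L2) :
    tTrunc p F + tTrunc q F = F := by
  ext m
  rw [coeff_add, Finsupp.add_apply, coeff_tTrunc, coeff_tTrunc]
  by_cases hp : p m.2
  · rw [if_pos hp, if_neg fun hq => (hpq _).1 hq hp, add_zero]
  · rw [if_neg hp, if_pos ((hpq _).2 hp), zero_add]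

lemma IsNonneg.tTrunc {F : L2} (hF : IsNonneg F) : IsNonneg (tTrunc p F) := by
  intro m
  rw [coeff_tTrunc]
  split_ifs
  exacts [hF m, le_rfl]

end tTrunc

def tCoeff (r : ℤ) (F : L2) : AddMonoidAlgebra ℤ ℤ :=
  .ofCoeff (F.coeff.comapDomain (fun j => (j, r)) (Prod.mk_left_injective r).injOn)

lemma coeff_tCoeff (r : ℤ) (F : L2) (j : ℤ) : (tCoeff r F).coeff j = F.coeff (j, r) := rfl

lemma IsNonneg.tCoeff {F : L2} (hF : IsNonneg F) (r : ℤ) : IsNonneg₁ (tCoeff r F) :=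
  fun j => hF (j, r)

lemma coeff_tInvMul (w : AddMonoidAlgebra ℤ ℤ) (m : ℤ × ℤ) :
    (tInvMul w).coeff m = if m.2 = -1 then w.coeff m.1 else 0 := by
  have : (tInvMul w).coeff = w.coeff.mapDomain fun j => (j, -1) := by
    rw [tInvMul, coeff_finsuppSum]
    rfl
  rw [this]
  split_ifs with hm
  · rw [← hm, Finsupp.mapDomain_apply (Prod.mk_left_injective _)]
  · exact Finsupp.mapDomain_of_notMem_range _ _ fun ⟨j, hj⟩ => hm (hj ▸ rfl)

lemma tNeg_eq_tInvMul_tCoeff {A : L2} (hA : A ∈ tSupported (-1 ≤ ·)) :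
    tNeg A = tInvMul (tCoeff (-1) A) := by
  ext m
  rw [tNeg_eq_tTrunc, coeff_tTrunc, coeff_tInvMul, coeff_tCoeff]
  split_ifs with hneg hm hm
  · rw [← hm]
  · by_contra! h
    have := mem_tSupported.1 hA m h
    omega
  · omega
  · rfl

def decompSum (f : ℕ → L2) : L2 := ∑ᶠ k : ℕ, f k * (1 + Q (2 * (k : ℤ)) 1)

def IsDecompCoeffs (f : ℕ → L2) : Prop :=
  (Function.support f).Finite ∧ (∀ k, IsNonneg (f k)) ∧ ∀ k, k < 2 → f k = 0

lemma oneDecomp_iff {z : L2} {s : ℤ} {f : ℕ → L2} :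
    OneDecomp z s f ↔ IsDecompCoeffs f ∧ z = Q s 0 * (Q 1 0 + Q (-1) 0) + decompSum f :=
  ⟨fun ⟨hfin, hnn, hlow, hz⟩ => ⟨⟨hfin, hnn, hlow⟩, hz⟩,
    fun ⟨⟨hfin, hnn, hlow⟩, hz⟩ => ⟨hfin, hnn, hlow, hz⟩⟩

lemma zeroDecomp_iff {z : L2} {f : ℕ → L2} :
    ZeroDecomp z f ↔ IsDecompCoeffs f ∧ z = decompSum f :=
  ⟨fun ⟨hfin, hnn, hlow, hz⟩ => ⟨⟨hfin, hnn, hlow⟩, hz⟩,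
    fun ⟨⟨hfin, hnn, hlow⟩, hz⟩ => ⟨hfin, hnn, hlow, hz⟩⟩

lemma IsDecompCoeffs.tTrunc {f : ℕ → L2} (hf : IsDecompCoeffs f) (p : ℤ → Prop)
    [DecidablePred p] : IsDecompCoeffs fun k => tTrunc p (f k) :=
  ⟨hf.1.subset (Function.support_comp_subset (map_zero _) f), fun k => (hf.2.1 k).tTrunc,
    fun k hk => by simp only [hf.2.2 k hk, map_zero]⟩

lemma decompSum_add {g h : ℕ → L2} (hg : (Function.support g).Finite)
    (hh : (Function.support h).Finite) : decompSum (g + h) = decompSum g + decompSum h := by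
  rw [decompSum, decompSum, decompSum, ← finsum_add_distrib
    (hg.subset (Function.support_mul_subset_left _ _))
    (hh.subset (Function.support_mul_subset_left _ _))]
  exact finsum_congr fun k => add_mul _ _ _

lemma IsNonneg.decompSum {f : ℕ → L2} (hf : ∀ k, IsNonneg (f k)) : IsNonneg (decompSum f) :=
  IsNonneg.finsum fun k => (hf k).mul ((isNonneg_Q 0 0).add (isNonneg_Q _ _))

lemma decompSum_mem_tSupported {p q : ℤ → Prop} {f : ℕ → L2} (hf : ∀ k, f k ∈ tSupported p)
    (hpq : ∀ r, p r → q r ∧ q (r + 1)) : decompSum f ∈ tSupported q := by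
  refine finsum_mem_tSupported fun k => mul_mem_tSupported (p' := fun r => r = 0 ∨ r = 1) (hf k)
    (add_mem (Q_mem_tSupported (Or.inl rfl)) (Q_mem_tSupported (Or.inr rfl))) ?_
  rintro a b ha (rfl | rfl)
  exacts [(add_zero a).symm ▸ (hpq a ha).1, (hpq a ha).2]

lemma tPos_add_tInvMul_tCoeff {A H : L2} (hA : A ∈ tSupported (-1 ≤ ·))
    (hH : H ∈ tSupported (· < 0)) : tPos (A + H) + tInvMul (tCoeff (-1) A) = A := by
  rw [← tNeg_eq_tInvMul_tCoeff hA, tPos_eq_tTrunc, tNeg_eq_tTrunc, map_add,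
    tTrunc_eq_zero hH fun r hr => not_le.2 hr, add_zero]
  exact tTrunc_add_tTrunc (fun _ => not_le.symm) A

lemma tNeg_sub_tInvMul_tCoeff {A H : L2} (hA : A ∈ tSupported (-1 ≤ ·))
    (hH : H ∈ tSupported (· < 0)) : tNeg (A + H) - tInvMul (tCoeff (-1) A) = H := by
  rw [← tNeg_eq_tInvMul_tCoeff hA, tNeg_eq_tTrunc, tNeg_eq_tTrunc, map_add, tTrunc_eq_self hH,
    add_sub_cancel_left]

theorem cutting_decompositions_general (z : L2) (s : ℤ) (f : ℕ → L2)
    (hdec : OneDecomp z s f) :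
    ∃ (w : AddMonoidAlgebra ℤ ℤ) (g h : ℕ → L2),
      IsNonneg₁ w ∧
      (∀ k, f k = g k + h k) ∧
      IsNonneg (tNeg z - tInvMul w) ∧
      OneDecomp (tPos z + tInvMul w) s g ∧
      ZeroDecomp (tNeg z - tInvMul w) h := by
  obtain ⟨hf, rfl⟩ := oneDecomp_iff.1 hdec
  set g := fun k => tTrunc (-1 ≤ ·) (f k)
  set h := fun k => tTrunc (· < -1) (f k)
  have hg : IsDecompCoeffs g := hf.tTrunc _
  have hh : IsDecompCoeffs h := hf.tTrunc _
  have hfgh : ∀ k, f k = g k + h k := fun k =>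
    (tTrunc_add_tTrunc (fun _ => not_le.symm) (f k)).symm
  set A := Q s 0 * (Q 1 0 + Q (-1) 0) + decompSum g
  have hA : A ∈ tSupported (-1 ≤ ·) := add_mem (Q_mul_Q_add_Q_mem_tSupported (by decide) _ _ _)
    (decompSum_mem_tSupported (fun k => tTrunc_mem_tSupported _) fun r hr => ⟨hr, by omega⟩)
  have hH : decompSum h ∈ tSupported (· < 0) :=
    decompSum_mem_tSupported (fun k => tTrunc_mem_tSupported _) fun r hr => ⟨by omega, by omega⟩
  have hz : Q s 0 * (Q 1 0 + Q (-1) 0) + decompSum f = A + decompSum h := by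
    rw [show f = g + h from funext hfgh, decompSum_add hg.1 hh.1, add_assoc]
  have hA_nonneg : IsNonneg A :=
    ((isNonneg_Q _ _).mul ((isNonneg_Q _ _).add (isNonneg_Q _ _))).add (IsNonneg.decompSum hg.2.1)
  refine ⟨tCoeff (-1) A, g, h, hA_nonneg.tCoeff _, hfgh, ?_, ?_, ?_⟩
  · rw [hz, tNeg_sub_tInvMul_tCoeff hA hH]
    exact IsNonneg.decompSum hh.2.1
  · exact oneDecomp_iff.2 ⟨hg, by rw [hz, tPos_add_tInvMul_tCoeff hA hH]⟩
  · exact zeroDecomp_iff.2 ⟨hh, by rw [hz, tNeg_sub_tInvMul_tCoeff hA hH]⟩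

/-- Cutting lemma: every `1`-decomposition of `z ∈ ℕ[q^{±1}, t^{±1}]` arises as the sum of a
`1`-decomposition of `u = (part of z with t-degree ≥ 0) + t^{-1} w(q)` and a `0`-decomposition of
`v = (part of z with t-degree < 0) - t^{-1} w(q)`, for some `w ∈ ℕ[q^{±1}]` with `v` having
non-negative coefficients. -/
theorem cutting_decompositions (z : L2) (hz : IsNonneg z) (s : ℤ) (f : ℕ → L2)
    (hdec : OneDecomp z s f) :
    ∃ (w : AddMonoidAlgebra ℤ ℤ) (g h : ℕ → L2),
      IsNonneg₁ w ∧
      (∀ k, f k = g k + h k) ∧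
      IsNonneg (tNeg z - tInvMul w) ∧
      OneDecomp (tPos z + tInvMul w) s g ∧
      ZeroDecomp (tNeg z - tInvMul w) h :=
  cutting_decompositions_general z s f hdec

end
end

section
/- The group presented by ⟨x, y | x y x = y x y, x⁴ = y⁵⟩ is the trivial group. -/
/-- The relator `x y x (y x y)⁻¹`. -/
def relAC1 : FreeGroup (Fin 2) :=
  (FreeGroup.of 0 * FreeGroup.of 1 * FreeGroup.of 0) *
    (FreeGroup.of 1 * FreeGroup.of 0 * FreeGroup.of 1)⁻¹

/-- The relator `x⁴ y⁻⁵`. -/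
def relAC2 : FreeGroup (Fin 2) := (FreeGroup.of 0) ^ 4 * ((FreeGroup.of 1) ^ 5)⁻¹

/-!
The braid relation `a b a = b a b` says that `a b` conjugates `a` to `b`. The element
`a ^ m = b ^ (m + 1)` commutes with both `a` and `b`, hence is fixed by that conjugation, which
sends it to `b ^ m`. So `b ^ m = b ^ (m + 1)`, i.e. `b = 1`, and then the braid relation gives
`a = 1`.
-/

section Braid

variable {G : Type*} [Group G] {a b : G}

theorem conj_eq_of_braid (h : a * b * a = b * a * b) : (a * b) * a * (a * b)⁻¹ = b := by
  rw [mul_inv_eq_iff_eq_mul, h, mul_assoc]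

theorem eq_one_of_braid_of_pow_eq_pow_succ (m : ℕ) (h : a * b * a = b * a * b)
    (hpow : a ^ m = b ^ (m + 1)) : a = 1 ∧ b = 1 := by
  have hcomm : Commute (a * b) (a ^ m) :=
    (Commute.self_pow a m).mul_left (hpow ▸ Commute.self_pow b (m + 1))
  have hbm : b ^ m = b ^ (m + 1) := by
    calc b ^ m = ((a * b) * a * (a * b)⁻¹) ^ m := by rw [conj_eq_of_braid h]
      _ = (a * b) * a ^ m * (a * b)⁻¹ := conj_pow
      _ = a ^ m := by rw [hcomm.eq, mul_inv_cancel_right]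
      _ = b ^ (m + 1) := hpow
  have hb : b = 1 := by simpa [pow_succ] using hbm.symm
  refine ⟨?_, hb⟩
  simpa [hb] using h

end Braid

theorem PresentedGroup.subsingleton_of_of_eq_one {α : Type*} {rels : Set (FreeGroup α)}
    (h : ∀ i : α, (of i : PresentedGroup rels) = 1) : Subsingleton (PresentedGroup rels) :=
  have hbot (x : PresentedGroup rels) : x = 1 :=
    Subgroup.mem_bot.mp (generated_by rels ⊥ (fun i => Subgroup.mem_bot.mpr (h i)) x)
  ⟨fun x y => (hbot x).trans (hbot y).symm⟩

/-- The group `⟨x, y ∣ x y x = y x y, x⁴ = y⁵⟩` is trivial. -/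
theorem presented_group_trivial :
    Subsingleton (PresentedGroup ({relAC1, relAC2} : Set (FreeGroup (Fin 2)))) := by
  set rels : Set (FreeGroup (Fin 2)) := {relAC1, relAC2}
  let x : PresentedGroup rels := .of 0
  let y : PresentedGroup rels := .of 1
  have hbraid : x * y * x = y * x * y :=
    PresentedGroup.mk_eq_mk_of_mul_inv_mem (Or.inl rfl : relAC1 ∈ rels)
  have hpow : x ^ 4 = y ^ (4 + 1) :=
    PresentedGroup.mk_eq_mk_of_mul_inv_mem (Or.inr rfl : relAC2 ∈ rels)
  obtain ⟨hx, hy⟩ := eq_one_of_braid_of_pow_eq_pow_succ 4 hbraid hpow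
  refine PresentedGroup.subsingleton_of_of_eq_one fun i => ?_
  fin_cases i
  exacts [hx, hy]
end
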